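/- arXiv:hep-ph/0307057 — 5 statements merged into one kernel-verified Lean document; each statement's English description precedes it below -/
import Mathlib

section
/- Let G and H be finite types, m : G → ℝ, and for each a ∈ G let T a be a real antisymmetric matrix indexed by G ⊕ H (i.e., (T a)ᵀ = −(T a)). Let v : H → ℝ and let φ₀ be the vector on G ⊕ H with all G-components zero and H-components given by v. Assume: (i) for each a ∈ G, the vector (T a) · φ₀ has G-component equal to m a at index a and 0 at all other G-indices, and all H-components zero; (ii) there is f : G → G → G → ℝ such that for all a, b ∈ G, (T a · T b − T b · T a) · φ₀ = ∑_c f a b c • ((T c) · φ₀). Define u a α i = (T a) (Sum.inl α) (Sum.inr i). Then for all a, b ∈ G and i ∈ H: m a * u b a i = m b * u a b i. -/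
open Matrix

/-- In a spontaneously broken gauge theory with antisymmetric generators `T a` acting on the
scalar multiplet, vacuum `φ₀ = (0, v)`, gauge boson masses `m a` given by `(T a)·φ₀`, and
the commutators closing on the vacuum, one has `m a * u b a i = m b * u a b i` where
`u a α i = (T a) (inl α) (inr i)`. -/
theorem goldstone_symmetry_relation
    (G H : Type*) [Fintype G] [DecidableEq G] [Fintype H]
    (m : G → ℝ) (T : G → Matrix (G ⊕ H) (G ⊕ H) ℝ)
    (hT : ∀ a, (T a)ᵀ = -(T a))
    (v : H → ℝ)
    (φ₀ : G ⊕ H → ℝ) (hφ₀ : φ₀ = Sum.elim (0 : G → ℝ) v)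
    (h1 : ∀ a, (T a).mulVec φ₀ = Sum.elim (fun b => if b = a then m a else 0) (0 : H → ℝ))
    (h2 : ∃ f : G → G → G → ℝ, ∀ a b,
        (T a * T b - T b * T a).mulVec φ₀ = ∑ c, f a b c • ((T c).mulVec φ₀)) :
    ∀ (a b : G) (i : H),
      m a * (T b) (Sum.inl a) (Sum.inr i) = m b * (T a) (Sum.inl b) (Sum.inr i) := by
  intro a b i
  obtain ⟨f, hf⟩ := h2
  -- key: evaluate commutator at inr i
  have key : ∀ x y : G, ((T x * T y).mulVec φ₀) (Sum.inr i)
      = (T x) (Sum.inr i) (Sum.inl y) * m y := by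
    intro x y
    rw [← Matrix.mulVec_mulVec, h1 y]
    simp only [Matrix.mulVec, dotProduct, Fintype.sum_sum_type, Sum.elim_inl,
      Sum.elim_inr, Pi.zero_apply, mul_zero, Finset.sum_const_zero, add_zero,
      mul_ite, mul_zero]
    simp
  have hfeq := congrFun (hf a b) (Sum.inr i)
  rw [Matrix.sub_mulVec] at hfeq
  simp only [Pi.sub_apply, key, Finset.sum_apply, Pi.smul_apply, h1, Sum.elim_inr,
    Pi.zero_apply, smul_zero, Finset.sum_const_zero] at hfeq
  have hanti : ∀ x : G, ∀ y : G, (T x) (Sum.inr i) (Sum.inl y) = -(T x) (Sum.inl y) (Sum.inr i) := by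
    intro x y
    have := congrFun (congrFun (hT x) (Sum.inl y)) (Sum.inr i)
    simpa [Matrix.transpose_apply] using this
  rw [hanti, hanti] at hfeq
  nlinarith [hfeq]
end

section
/- Let I be a type, m : I → ℝ, and t, f : I → I → I → ℝ. Assume t is antisymmetric in its last two arguments (t a b c = −t a c b for all a,b,c), f is totally antisymmetric in its three arguments, and the sum rule holds: for all a, b, c, m b * t a c b − m a * t b c a = m c * f a b c. Then for all a, b, c: m a * (m b * t c b a + m c * t b c a) = f a b c * (m b ^ 2 − m c ^ 2). -/
/-- The Goldstone–two-gauge-boson coupling relation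
`m_a g_{φWW}^{abc} = f^{abc}(m_b² − m_c²)` with `g_{φWW}^{abc} = m_b t^c_{ba} + m_c t^b_{ca}`,
derived from the sum rule for the couplings `t`. -/
theorem goldstone_two_gauge_coupling (I : Type*) (m : I → ℝ) (t f : I → I → I → ℝ)
    (ht : ∀ a b c, t a b c = - t a c b)
    (hf12 : ∀ a b c, f b a c = - f a b c)
    (hf23 : ∀ a b c, f a c b = - f a b c)
    (hsum : ∀ a b c, m b * t a c b - m a * t b c a = m c * f a b c) :
    ∀ a b c, m a * (m b * t c b a + m c * t b c a) = f a b c * (m b ^ 2 - m c ^ 2) := by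
  intro a b c
  have h1 := hsum c a b
  have h2 := hsum b a c
  have e1 : f c a b = f a b c := by rw [hf12 a c b, hf23 a b c]; ring
  have e2 : f b a c = - f a b c := hf12 a b c
  linear_combination m b * h1 + m c * h2 + m b * m c * ht a b c
    + m b ^ 2 * e1 + m c ^ 2 * e2
end

section
/- Let I be a type, m : I → ℝ, and t, f : I → I → I → ℝ. Assume t is antisymmetric in its last two arguments (t a b c = −t a c b), f is totally antisymmetric, and for all a, b, c: m b * t a c b − m a * t b c a = m c * f a b c. Then for all a, b, c: 2 * m a * m c * t b a c = f b a c * (m b ^ 2 − m a ^ 2 − m c ^ 2). -/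
/-- The closed-form solution `2 m_a m_c t^b_{ac} = f^{bac}(m_b² − m_a² − m_c²)` of the sum rule
for the two-Goldstone–gauge-boson coupling. -/
theorem two_goldstone_gauge_coupling (I : Type*) (m : I → ℝ) (t f : I → I → I → ℝ)
    (ht : ∀ a b c, t a b c = - t a c b)
    (hf12 : ∀ a b c, f b a c = - f a b c)
    (hf23 : ∀ a b c, f a c b = - f a b c)
    (hsum : ∀ a b c, m b * t a c b - m a * t b c a = m c * f a b c) :
    ∀ a b c, 2 * m a * m c * t b a c = f b a c * (m b ^ 2 - m a ^ 2 - m c ^ 2) := by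
  intro a b c
  have t1 : t a c b = - t a b c := by linarith [ht a b c]
  have t2 : t c a b = - t c b a := ht c a b
  have t3 : t b c a = - t b a c := by linarith [ht b a c]
  have e1 : f c a b = f a b c := by
    have h := hf12 a c b
    have h' := hf23 a b c
    linarith
  have e2 : f b c a = f a b c := by
    have h := hf12 c b a
    have h' := hf23 c b a
    linarith
  have e3 : f b a c = - f a b c := hf12 a b c
  have E1 := hsum a b c
  have E3 := hsum c a b
  have E4 := hsum b c a
  rw [t1, t3] at E1
  rw [e1] at E3
  rw [t2, e2] at E4
  linear_combination (-(m b)) * E3 + (m a) * E4 + (m c) * E1 - (m b^2 - m a^2 - m c^2) * e3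
end

section
/- Let E be a real Banach space (or ℝⁿ), V : E → ℝ a twice continuously differentiable function, and T : E →ₗ[ℝ] E a linear map. Assume the invariance condition: for all x ∈ E, fderiv ℝ V x (T x) = 0. If φ₀ ∈ E is a critical point of V (fderiv ℝ V φ₀ = 0), then the second derivative of V at φ₀, regarded as a bilinear form, annihilates the direction T φ₀: for all y ∈ E, D²V(φ₀) (T φ₀) y = 0. -/
/-!
Differentiate the invariance identity `DV(x)(T x) = 0` at `φ₀` along a line `φ₀ + t • y`
(a line, because `T` need not be continuous): this gives
`D²V(φ₀) y (T φ₀) + DV(φ₀)(T y) = 0`. The second term vanishes at a critical point, and the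
symmetry of the second derivative of a `C²` function turns the first into `D²V(φ₀) (T φ₀) y`.
-/

section

variable {𝕜 E G : Type*} [NontriviallyNormedField 𝕜] [NormedAddCommGroup E] [NormedSpace 𝕜 E]
  [NormedAddCommGroup G] [NormedSpace 𝕜 G]

theorem HasFDerivAt.hasDerivAt_apply_linearMap_line {F : E → E →L[𝕜] G} {F' : E →L[𝕜] E →L[𝕜] G}
    {x : E} (hF : HasFDerivAt F F' x) (T : E →ₗ[𝕜] E) (y : E) :
    HasDerivAt (fun t : 𝕜 => F (x + t • y) (T (x + t • y))) (F' y (T x) + F x (T y)) 0 := by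
  have hline : HasDerivAt (fun t : 𝕜 => x + t • y) y 0 := by
    simpa using ((hasDerivAt_id (0 : 𝕜)).smul_const y).const_add x
  have hF₀ : HasFDerivAt F F' (x + (0 : 𝕜) • y) := by simpa using hF
  have hFline : HasDerivAt (fun t : 𝕜 => F (x + t • y)) (F' y) 0 :=
    hF₀.comp_hasDerivAt (0 : 𝕜) hline
  have hTline : HasDerivAt (fun t : 𝕜 => T x + t • T y) (T y) 0 := by
    simpa using ((hasDerivAt_id (0 : 𝕜)).smul_const (T y)).const_add (T x)
  simpa [map_add, map_smul] using hFline.clm_apply hTline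

theorem fderiv_apply_add_eq_zero_of_apply_linearMap_eq_zero {F : E → E →L[𝕜] G} {x : E}
    (hF : DifferentiableAt 𝕜 F x) (T : E →ₗ[𝕜] E) (hinv : ∀ z, F z (T z) = 0) (y : E) :
    fderiv 𝕜 F x y (T x) + F x (T y) = 0 := by
  have hderiv := hF.hasFDerivAt.hasDerivAt_apply_linearMap_line T y
  simp only [hinv] at hderiv
  exact (hasDerivAt_const (0 : 𝕜) (0 : G)).unique hderiv |>.symm

end

theorem goldstone_theorem_general (E : Type*) [NormedAddCommGroup E] [NormedSpace ℝ E]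
    (V : E → ℝ) (hV : ContDiff ℝ 2 V) (T : E →ₗ[ℝ] E)
    (hinv : ∀ x, fderiv ℝ V x (T x) = 0)
    (φ₀ : E) (hcrit : fderiv ℝ V φ₀ = 0) :
    ∀ y, fderiv ℝ (fderiv ℝ V) φ₀ (T φ₀) y = 0 := by
  intro y
  have hDV : DifferentiableAt ℝ (fderiv ℝ V) φ₀ :=
    (hV.fderiv_right (m := 1) le_rfl).differentiable one_ne_zero φ₀
  have hsymm := ((hV.contDiffAt (x := φ₀)).isSymmSndFDerivAt (by simp)).eq (T φ₀) y
  have hline := fderiv_apply_add_eq_zero_of_apply_linearMap_eq_zero hDV T hinv y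
  rwa [hcrit, zero_apply, add_zero, ← hsymm] at hline

/-- Tree-level Goldstone theorem: if the potential `V` is invariant in the sense
`DV(x)(Tx) = 0` for all `x` and `φ₀` is a critical point of `V`, then the Hessian of `V`
at `φ₀` annihilates the broken direction `T φ₀`. -/
theorem goldstone_theorem (E : Type*) [NormedAddCommGroup E] [NormedSpace ℝ E]
    [CompleteSpace E]
    (V : E → ℝ) (hV : ContDiff ℝ 2 V) (T : E →ₗ[ℝ] E)
    (hinv : ∀ x, fderiv ℝ V x (T x) = 0)
    (φ₀ : E) (hcrit : fderiv ℝ V φ₀ = 0) :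
    ∀ y, fderiv ℝ (fderiv ℝ V) φ₀ (T φ₀) y = 0 :=
  goldstone_theorem_general E V hV T hinv φ₀ hcrit
end

section
/- Let m_e, m_W, m_Z be nonzero real numbers and g_CC, g_A, g_ZWW, g_Hee, g_HWW, g_HZZ complex numbers satisfying: (H1) g_CC² = −2*I*g_ZWW*g_A; (H2) g_CC² = −g_HWW*g_Hee/(2*m_e) − I*g_ZWW*g_A; (H3) m_e*g_A² = −g_HZZ*g_Hee/8; (H4) −g_Hee = m_e*g_HWW/(2*m_W²); (H5) −g_Hee = m_e*g_HZZ/(2*m_Z²). Then 8*m_W²*g_A² = m_Z²*g_CC². -/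
/-- The Ward-identity constraints for `e⁺e⁻ → W⁺W⁻` (one and two contractions) and
`e⁺e⁻ → ZH` fix the axial `Z` coupling: `8 m_W² g_A² = m_Z² g_CC²`. -/
theorem weinberg_angle_fixed (m_e m_W m_Z : ℝ)
    (hme : m_e ≠ 0) (hmW : m_W ≠ 0) (hmZ : m_Z ≠ 0)
    (g_CC g_A g_ZWW g_Hee g_HWW g_HZZ : ℂ)
    (H1 : g_CC ^ 2 = -2 * Complex.I * g_ZWW * g_A)
    (H2 : g_CC ^ 2 = -g_HWW * g_Hee / (2 * (m_e : ℂ)) - Complex.I * g_ZWW * g_A)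
    (H3 : (m_e : ℂ) * g_A ^ 2 = -g_HZZ * g_Hee / 8)
    (H4 : -g_Hee = (m_e : ℂ) * g_HWW / (2 * (m_W : ℂ) ^ 2))
    (H5 : -g_Hee = (m_e : ℂ) * g_HZZ / (2 * (m_Z : ℂ) ^ 2)) :
    8 * (m_W : ℂ) ^ 2 * g_A ^ 2 = (m_Z : ℂ) ^ 2 * g_CC ^ 2 := by
  have hme' : (m_e:ℂ) ≠ 0 := by exact_mod_cast hme
  have hmW' : (m_W:ℂ) ≠ 0 := by exact_mod_cast hmW
  have hmZ' : (m_Z:ℂ) ≠ 0 := by exact_mod_cast hmZ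
  field_simp at H2 H4 H5
  have key : (m_e:ℂ)^2 * (8 * (m_W:ℂ)^2 * g_A^2) = (m_e:ℂ)^2 * ((m_Z:ℂ)^2 * g_CC^2) := by
    linear_combination (8*(m_W:ℂ)^2*(m_e:ℂ))*H3 + ((m_W:ℂ)^2*g_Hee)*H5
      - ((m_Z:ℂ)^2*(m_e:ℂ))*H2 + ((m_Z:ℂ)^2*(m_e:ℂ)^2)*H1 - ((m_Z:ℂ)^2*g_Hee)*H4
  exact mul_left_cancel₀ (pow_ne_zero 2 hme') key
end
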